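/- arXiv:2401.17687 — 5 statements merged into one kernel-verified Lean document; each statement's English description precedes it below -/
import Mathlib

section
/- Let H(t) = ∑_{n≥0} h_n t^n be the complete homogeneous symmetric function generating series, and let [p_n] be defined by D_q E(t)/E(t) = ∑_{n≥1} [p_n] (-t)^{n-1} where E(t) = ∑ e_n t^n. Then ∑_{n≥1} [p_n] t^{n-1} = D_q H(t)/H(qt). -/
/-- The q-integer `[n]_q = 1 + q + ... + q^{n-1}`. -/
noncomputable def qInt {K : Type*} [CommRing K] (q : K) (n : ℕ) : K :=
  ∑ i ∈ Finset.range n, q ^ i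

/-- The q-derivative `D_q F(t) = (F(qt) - F(t))/((q-1)t)`. -/
noncomputable def qDeriv {K : Type*} [CommRing K] (q : K) (F : PowerSeries K) :
    PowerSeries K :=
  PowerSeries.mk fun n => qInt q (n + 1) * PowerSeries.coeff (n + 1) F

/-!
Applying the q-Leibniz rule `D_q(FG) = F(qt) D_q G + D_q F · G` to `E(-t) H(t) = 1` gives
`D_q H = -H(qt) · D_q(E(-t)) · H(t)`. By the definition of `[pₙ]`, `D_q(E(-t)) = -E(-t) P(t)` with
`P(t) = ∑ [pₙ] t^{n-1}`, and `E(-t) H(t) = 1` once more leaves `D_q H = H(qt) P(t)`.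
The Leibniz rule is proved for `t D_q`, which acts on `tⁿ` by `[n]_q` and so is a twisted
derivation because `[i + j]_q = [i]_q + qⁱ [j]_q`.
-/

open PowerSeries

section QDerivative

variable {K : Type*} [CommRing K] (q : K)

theorem qInt_add (a b : ℕ) : qInt q (a + b) = qInt q a + q ^ a * qInt q b := by
  simp only [qInt, Finset.sum_range_add, Finset.mul_sum, pow_add]

noncomputable def qEuler (F : PowerSeries K) : PowerSeries K :=
  mk fun n => qInt q n * coeff n F

theorem X_mul_qDeriv (F : PowerSeries K) : X * qDeriv q F = qEuler q F := by
  ext (_ | n)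
  · simp [qEuler, qInt]
  · rw [coeff_succ_X_mul, qDeriv, qEuler, coeff_mk, coeff_mk]

theorem qEuler_mul (F G : PowerSeries K) :
    qEuler q (F * G) = rescale q F * qEuler q G + qEuler q F * G := by
  ext n
  simp only [qEuler, coeff_mk, map_add, coeff_mul, coeff_rescale, Finset.mul_sum,
    ← Finset.sum_add_distrib]
  refine Finset.sum_congr rfl fun ij hij => ?_
  rw [← Finset.HasAntidiagonal.mem_antidiagonal.mp hij, qInt_add]
  ring

theorem qDeriv_mul (F G : PowerSeries K) :
    qDeriv q (F * G) = rescale q F * qDeriv q G + qDeriv q F * G := by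
  apply X_mul_cancel
  rw [X_mul_qDeriv, qEuler_mul, ← X_mul_qDeriv, ← X_mul_qDeriv]
  ring

theorem qDeriv_one : qDeriv q (1 : PowerSeries K) = 0 := by
  ext n
  simp [qDeriv, coeff_one]

theorem qDeriv_rescale (c : K) (F : PowerSeries K) :
    qDeriv q (rescale c F) = C c * rescale c (qDeriv q F) := by
  ext n
  simp only [qDeriv, coeff_mk, coeff_rescale, coeff_C_mul, pow_succ]
  ring

theorem qDeriv_eq_of_mul_eq_one {F G : PowerSeries K} (hFG : F * G = 1) :
    qDeriv q G = -(rescale q G * qDeriv q F * G) := by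
  have hD : rescale q F * qDeriv q G + qDeriv q F * G = 0 := by
    rw [← qDeriv_mul, hFG, qDeriv_one]
  have hF : rescale q G * rescale q F = 1 := by
    rw [← map_mul, mul_comm, hFG, map_one]
  linear_combination rescale q G * hD - qDeriv q G * hF
end QDerivative

theorem stmt3_general {K : Type*} [CommRing K] (q : K) (e h p : ℕ → K)
    (hdefp : qDeriv q (PowerSeries.mk e) =
      PowerSeries.mk e * PowerSeries.mk (fun n => (-1 : K) ^ n * p (n + 1)))
    (hH : PowerSeries.rescale (-1 : K) (PowerSeries.mk e) * PowerSeries.mk h = 1) :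
    qDeriv q (PowerSeries.mk h) =
      PowerSeries.rescale q (PowerSeries.mk h) * PowerSeries.mk (fun n => p (n + 1)) := by
  set E := mk e
  set H := mk h
  set P := mk fun n => p (n + 1)
  have hDE : qDeriv q (rescale (-1) E) = -(rescale (-1) E * P) := by
    rw [qDeriv_rescale, hdefp, ← rescale_mk, map_mul, rescale_rescale, neg_one_mul, neg_neg,
      rescale_one, RingHom.id_apply, map_neg, map_one, neg_one_mul]
  rw [qDeriv_eq_of_mul_eq_one q hH, hDE]
  linear_combination rescale q H * P * hH

/-- With `[pₙ]` defined via `E(t)` by `D_q E/E = ∑ [pₙ](-t)^{n-1}` and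
`H(t) = E(-t)⁻¹`, one has `∑_{n≥1} [pₙ] t^{n-1} = D_q H(t)/H(qt)`. -/
theorem stmt3 {K : Type*} [CommRing K] (q : K) (e h p : ℕ → K) (he0 : e 0 = 1)
    (hdefp : qDeriv q (PowerSeries.mk e) =
      PowerSeries.mk e * PowerSeries.mk (fun n => (-1 : K) ^ n * p (n + 1)))
    (hH : PowerSeries.rescale (-1 : K) (PowerSeries.mk e) * PowerSeries.mk h = 1) :
    qDeriv q (PowerSeries.mk h) =
      PowerSeries.rescale q (PowerSeries.mk h) * PowerSeries.mk (fun n => p (n + 1)) :=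
  stmt3_general q e h p hdefp hH
end

section
/- With [p_n] the q-power sums defined by ∑_{n≥1} [p_n] t^{n-1} = D_q H(t)/H(qt), for all n ≥ 1 one has ∑_{k=1}^{n} h_{n-k} [p_k] q^{n-k} = [n]_q h_n. -/
/-!
The identity is the coefficient of `t^{n-1}` in `D_q H(t) = H(qt) · ∑_{k ≥ 1} [p_k] t^{k-1}`:
on the left it is `[n]_q h_n`, on the right the convolution `∑_k q^{n-k} h_{n-k} [p_k]`.
-/

open PowerSeries Finset

theorem coeff_qDeriv {K : Type*} [CommRing K] (q : K) (F : PowerSeries K) (n : ℕ) :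
    coeff n (qDeriv q F) = qInt q (n + 1) * coeff (n + 1) F :=
  coeff_mk _ _

theorem PowerSeries.coeff_rescale_mul {R : Type*} [CommRing R] (q : R) (F G : R⟦X⟧) (m : ℕ) :
    coeff m (rescale q F * G) =
      ∑ k ∈ range (m + 1), q ^ (m - k) * coeff (m - k) F * coeff k G := by
  rw [coeff_mul, ← Nat.sum_antidiagonal_swap, Nat.sum_antidiagonal_eq_sum_range_succ_mk]
  simp [coeff_rescale]

theorem Finset.sum_Icc_one_eq_sum_range {M : Type*} [AddCommMonoid M] (f : ℕ → M) (m : ℕ) :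
    ∑ k ∈ Icc 1 (m + 1), f k = ∑ k ∈ range (m + 1), f (k + 1) := by
  rw [range_eq_Ico, sum_Ico_add' f 0 (m + 1) 1, zero_add, Ico_add_one_right_eq_Icc]

theorem stmt4_general {K : Type*} [CommRing K] (q : K) (h p : ℕ → K)
    (hdefp : qDeriv q (PowerSeries.mk h) =
      PowerSeries.rescale q (PowerSeries.mk h) * PowerSeries.mk (fun n => p (n + 1))) :
    ∀ n : ℕ, 1 ≤ n →
      ∑ k ∈ Finset.Icc 1 n, h (n - k) * p k * q ^ (n - k) = qInt q n * h n := by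
  intro n hn
  obtain ⟨m, rfl⟩ := Nat.exists_eq_add_of_le' hn
  have hcoeff := congrArg (coeff m) hdefp
  simp only [coeff_qDeriv, coeff_rescale_mul, coeff_mk] at hcoeff
  rw [sum_Icc_one_eq_sum_range, hcoeff]
  refine sum_congr rfl fun k _ => ?_
  rw [Nat.add_sub_add_right]
  ring

/-- With `[pₙ]` defined by `∑_{n≥1}[pₙ]t^{n-1} = D_q H(t)/H(qt)`, for `n ≥ 1`
`∑_{k=1}^n h_{n-k} [p_k] q^{n-k} = [n]_q hₙ`. -/
theorem stmt4 {K : Type*} [CommRing K] (q : K) (h p : ℕ → K) (hh0 : h 0 = 1)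
    (hdefp : qDeriv q (PowerSeries.mk h) =
      PowerSeries.rescale q (PowerSeries.mk h) * PowerSeries.mk (fun n => p (n + 1))) :
    ∀ n : ℕ, 1 ≤ n →
      ∑ k ∈ Finset.Icc 1 n, h (n - k) * p k * q ^ (n - k) = qInt q n * h n :=
  stmt4_general q h p hdefp
end

section
/- For n ≥ 1, [n]_q! · e_n = ∑_k (-1)^{n-r} ([n-1]_q!/([k_1]_q [k_2]_q ⋯ [k_{r-1}]_q · [k_r]_q!)) · [p_{n-k_1}][p_{k_1-k_2}]⋯[p_{k_{r-1}-k_r}], where the sum extends over all strictly decreasing integer sequences k = (k_1, ..., k_r) with r ≥ 1 and n-1 ≥ k_1 > k_2 > ... > k_{r-1} > k_r = 0. -/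
/-- The q-factorial `[n]_q!`. -/
noncomputable def qFact {K : Type*} [CommRing K] (q : K) (n : ℕ) : K :=
  ∏ i ∈ Finset.range n, qInt q (i + 1)

/-- For a finite set `T = {k_1 > ... > k_{r-1}} ⊆ {1,...,n-1}` (together with `k_r = 0`),
the product `[p_{n-k_1}][p_{k_1-k_2}]⋯[p_{k_{r-1}-k_r}]` of the `p`'s over the gaps of the
chain `0 < k_{r-1} < ... < k_1 < n`. -/
noncomputable def gapProd {K : Type*} [CommRing K] (p : ℕ → K) (n : ℕ) (T : Finset ℕ) : K :=
  (((0 :: T.sort (· ≤ ·)) ++ [n]).zip (((0 :: T.sort (· ≤ ·)) ++ [n]).tail) |>.map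
    (fun ab => p (ab.2 - ab.1))).prod

/-!
Comparing coefficients of `t^(n-1)` in `D_q E = E · ∑ (-1)^m [p_{m+1}] t^m` gives the triangular
recurrence `[n] e_n = ∑_{k<n} e_k (-1)^(n-k-1) [p_{n-k}]`. Unrolling it down to `e_0 = 1` expands
`[n] e_n` as a sum over chains `0 = k_r < ⋯ < k_1 < n`, each contributing the product over its
gaps divided by `[k_1]⋯[k_{r-1}]`; the signs multiply to `(-1)^(n-r)` because the `r` gaps add
up to `n`. Multiplying by `[n-1]!` gives the formula.
-/

open Finset

lemma Finset.sort_insert_of_forall_le {S : Finset ℕ} {k : ℕ} (hk : ∀ x ∈ S, x ≤ k)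
    (hkS : k ∉ S) :
    (insert k S).sort (· ≤ ·) = S.sort (· ≤ ·) ++ [k] := by
  refine List.Perm.eq_of_pairwise' (pairwise_sort _ _) ?_ ?_
  · rw [List.pairwise_append]
    exact ⟨pairwise_sort _ _, List.pairwise_singleton _ _,
      fun a ha b hb => (List.mem_singleton.1 hb) ▸ hk a ((mem_sort _).1 ha)⟩
  · exact (sort_perm_toList _ _).trans <| (toList_insert hkS).trans <|
      (((sort_perm_toList S _).symm).cons k).trans (List.perm_append_singleton k _).symm

lemma Finset.sum_powerset_Icc_eq_add_sum_insert {M : Type*} [AddCommMonoid M]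
    (g : Finset ℕ → M) (n : ℕ) :
    ∑ T ∈ (Icc 1 n).powerset, g T =
      g ∅ + ∑ k ∈ Icc 1 n, ∑ S ∈ (Icc 1 (k - 1)).powerset, g (insert k S) := by
  induction n with
  | zero => simp
  | succ n ih =>
    have hn : n + 1 ∉ Icc 1 n := by simp
    rw [← insert_Icc_right_eq_Icc_add_one (Nat.le_add_left 1 n), sum_powerset_insert hn, ih,
      sum_insert hn, Nat.add_sub_cancel, add_assoc, add_comm (∑ S ∈ _, _)]

noncomputable def chainGapProd {K : Type*} [CommRing K] (p : ℕ → K) (l : List ℕ) : K :=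
  ((l.zip l.tail).map fun ab => p (ab.2 - ab.1)).prod

section GapProd

variable {K : Type*} [CommRing K] (p : ℕ → K)

lemma chainGapProd_cons_cons (a b : ℕ) (l : List ℕ) :
    chainGapProd p (a :: b :: l) = p (b - a) * chainGapProd p (b :: l) := by
  simp [chainGapProd]

lemma chainGapProd_append_pair :
    ∀ (l : List ℕ) (a b : ℕ),
      chainGapProd p (l ++ [a, b]) = chainGapProd p (l ++ [a]) * p (b - a)
  | [], a, b => by simp [chainGapProd]
  | [c], a, b => by simp [chainGapProd]
  | c :: d :: l, a, b => by
      have ih := chainGapProd_append_pair (d :: l) a b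
      simp only [List.cons_append] at ih ⊢
      rw [chainGapProd_cons_cons, chainGapProd_cons_cons, ih, mul_assoc]

lemma gapProd_empty (n : ℕ) : gapProd p n ∅ = p n := by
  simp [gapProd]

lemma gapProd_insert_of_forall_le {n k : ℕ} {S : Finset ℕ} (hk : ∀ x ∈ S, x ≤ k)
    (hkS : k ∉ S) :
    gapProd p n (insert k S) = gapProd p k S * p (n - k) := by
  have h := chainGapProd_append_pair p (0 :: S.sort (· ≤ ·)) k n
  simp only [chainGapProd, List.cons_append] at h
  simp only [gapProd, sort_insert_of_forall_le hk hkS, List.cons_append, List.append_assoc]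
  exact h

end GapProd

lemma gapProd_neg_one_pow_mul {K : Type*} [CommRing K] (p : ℕ → K) {n : ℕ} {T : Finset ℕ}
    (hT : T ⊆ Icc 1 (n - 1)) :
    gapProd (fun m => (-1 : K) ^ (m - 1) * p m) n T =
      (-1) ^ (n - (T.card + 1)) * gapProd p n T := by
  induction T using induction_on_max generalizing n with
  | empty => simp [gapProd_empty]
  | insert k S hlt ih =>
    have hk := mem_Icc.1 (hT (mem_insert_self k S))
    have hS : S ⊆ Icc 1 (k - 1) := fun x hx => by
      have := mem_Icc.1 (hT (mem_insert_of_mem hx))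
      have := hlt x hx
      exact mem_Icc.2 (by omega)
    have hcard : S.card ≤ k - 1 := (card_le_card hS).trans (by simp)
    have hkS : k ∉ S := fun h => (hlt k h).false
    have hle : ∀ x ∈ S, x ≤ k := fun x hx => (hlt x hx).le
    rw [gapProd_insert_of_forall_le _ hle hkS, gapProd_insert_of_forall_le _ hle hkS, ih hS,
      card_insert_of_notMem hkS,
      show n - (S.card + 1 + 1) = (k - (S.card + 1)) + (n - k - 1) by omega, pow_add]
    ring

theorem mul_eq_sum_gapProd_div_of_recurrence {K : Type*} [Field K] (a b c : ℕ → K)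
    (ha0 : a 0 = 1) (hc : ∀ j, 1 ≤ j → c j ≠ 0)
    (hrec : ∀ n, 1 ≤ n → c n * a n = ∑ k ∈ range n, a k * b (n - k)) :
    ∀ n, 1 ≤ n → c n * a n =
      ∑ T ∈ (Icc 1 (n - 1)).powerset, gapProd b n T / ∏ j ∈ T, c j := by
  intro n
  induction n using Nat.strong_induction_on with
  | _ n ih =>
    intro hn
    have hrange : range n = insert 0 (Icc 1 (n - 1)) := by
      ext x; simp only [mem_range, mem_insert, mem_Icc]; omega
    rw [hrec n hn, sum_powerset_Icc_eq_add_sum_insert, hrange,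
      sum_insert (by simp), ha0, gapProd_empty, prod_empty, div_one, one_mul,
      Nat.sub_zero]
    congr 1
    refine sum_congr rfl fun k hk => ?_
    obtain ⟨hk1, hkn⟩ := mem_Icc.1 hk
    have hak : a k = (∑ S ∈ (Icc 1 (k - 1)).powerset, gapProd b k S / ∏ j ∈ S, c j) / c k :=
      eq_div_of_mul_eq (hc k hk1) (by rw [mul_comm, ih k (by omega) hk1])
    rw [hak, sum_div, sum_mul]
    refine sum_congr rfl fun S hS => ?_
    have hSk : ∀ x ∈ S, x < k := fun x hx => by
      have := mem_Icc.1 (mem_powerset.1 hS hx); omega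
    have hkS : k ∉ S := fun h => (hSk k h).false
    rw [gapProd_insert_of_forall_le _ (fun x hx => (hSk x hx).le) hkS, prod_insert hkS]
    ring

lemma qFact_eq_qFact_pred_mul {K : Type*} [CommRing K] (q : K) {n : ℕ} (hn : 1 ≤ n) :
    qFact q n = qFact q (n - 1) * qInt q n := by
  obtain ⟨m, rfl⟩ := Nat.exists_eq_add_of_le' hn
  exact prod_range_succ _ _

lemma qInt_mul_coeff_succ_of_qDeriv_eq_mul {K : Type*} [CommRing K] (q : K)
    {F G : PowerSeries K} (h : qDeriv q F = F * G) (n : ℕ) :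
    qInt q (n + 1) * PowerSeries.coeff (n + 1) F =
      ∑ k ∈ range (n + 1), PowerSeries.coeff k F * PowerSeries.coeff (n - k) G := by
  have := congrArg (PowerSeries.coeff n) h
  rwa [PowerSeries.coeff_mul, Nat.sum_antidiagonal_eq_sum_range_succ_mk, qDeriv,
    PowerSeries.coeff_mk] at this

/-- The sequences `n-1 ≥ k_1 > ... > k_{r-1} > k_r = 0` are encoded by the set
`T = {k_1,...,k_{r-1}} ⊆ {1,...,n-1}`, so that `r = |T| + 1` and `[k_r]! = [0]! = 1`. -/
theorem stmt5 {K : Type*} [Field K] (q : K)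
    (hq : ∀ m : ℕ, 1 ≤ m → qInt q m ≠ 0)
    (e p : ℕ → K) (he0 : e 0 = 1)
    (hdefp : qDeriv q (PowerSeries.mk e) =
      PowerSeries.mk e * PowerSeries.mk (fun n => (-1 : K) ^ n * p (n + 1))) :
    ∀ n : ℕ, 1 ≤ n →
      qFact q n * e n =
        ∑ T ∈ (Finset.Icc 1 (n - 1)).powerset,
          (-1 : K) ^ (n - (T.card + 1)) *
            (qFact q (n - 1) / ∏ j ∈ T, qInt q j) * gapProd p n T := by
  have hrec : ∀ n, 1 ≤ n →
      qInt q n * e n = ∑ k ∈ range n, e k * ((-1) ^ (n - k - 1) * p (n - k)) := by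
    intro n hn
    obtain ⟨m, rfl⟩ := Nat.exists_eq_add_of_le' hn
    have h := qInt_mul_coeff_succ_of_qDeriv_eq_mul q hdefp m
    simp only [PowerSeries.coeff_mk] at h
    rw [h]
    refine sum_congr rfl fun k hk => ?_
    have hkm : k ≤ m := Nat.lt_succ_iff.1 (mem_range.1 hk)
    rw [Nat.sub_add_comm hkm, Nat.add_sub_cancel]
  intro n hn
  rw [qFact_eq_qFact_pred_mul q hn, mul_assoc, mul_eq_sum_gapProd_div_of_recurrence e
    (fun m => (-1) ^ (m - 1) * p m) (qInt q) he0 hq hrec n hn, mul_sum]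
  refine sum_congr rfl fun T hT => ?_
  rw [gapProd_neg_one_pow_mul p (mem_powerset.1 hT)]
  ring
end

section
/- For n ≥ 1, e_n = ∑_{|λ|=n} ε_λ [z_λ]_q^{-1} [p_λ]_q, where ε_λ = (-1)^{|λ|-ℓ(λ)}, [p_λ] = [p_{λ_1}]⋯[p_{λ_r}], and [z_λ]_q^{-1} = ∑_u ([n]_q [n-u_1]_q [n-u_1-u_2]_q ⋯ [u_r]_q)^{-1}, the sum ranging over all distinct permutations u = (u_1,...,u_r) of the parts of λ. -/
/-!
Comparing coefficients of `tⁿ` in `D_q E = E · P` gives the recursion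
`[n+1] e_{n+1} = ∑ⱼ (-1)ʲ p_{j+1} e_{n-j}`. Unrolling it writes `eₙ` as a sum over the
compositions `u` of `n`, the `i`-th step contributing the factor `[n - u₁ - ⋯ - u_{i-1}]⁻¹`
and choosing the part `uᵢ`. The compositions with a given underlying partition `λ` are the
distinct permutations of the parts of `λ`, which regroups the sum as in the statement.
-/

open Finset PowerSeries

theorem qInt_succ_mul_eq_sum_of_qDeriv_eq_mul {K : Type*} [CommRing K] {q : K} {e c : ℕ → K}
    (h : qDeriv q (mk e) = mk e * mk c) (n : ℕ) :
    qInt q (n + 1) * e (n + 1) = ∑ j ∈ range (n + 1), e (n - j) * c j := by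
  have hn := congrArg (coeff n) h
  rw [qDeriv, coeff_mk, coeff_mk, coeff_mul, ← Nat.sum_antidiagonal_swap,
    Nat.sum_antidiagonal_eq_sum_range_succ_mk] at hn
  simpa using hn

theorem List.mem_permutations_toList_toFinset {α : Type*} [DecidableEq α] {s : Multiset α}
    {u : List α} : u ∈ s.toList.permutations.toFinset ↔ (u : Multiset α) = s := by
  rw [List.mem_toFinset, List.mem_permutations, ← Multiset.coe_eq_coe, Multiset.coe_toList]

-- Compositions are described through the partitions they rearrange, so that regrouping by
-- partitions is `Finset.sum_biUnion`; `mem_compositions` gives the intrinsic description.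
noncomputable def compositions (n : ℕ) : Finset (List ℕ) :=
  (univ : Finset n.Partition).biUnion fun μ => μ.parts.toList.permutations.toFinset

theorem mem_compositions {n : ℕ} {u : List ℕ} :
    u ∈ compositions n ↔ u.sum = n ∧ ∀ x ∈ u, 0 < x := by
  simp only [compositions, mem_biUnion, mem_univ, true_and,
    List.mem_permutations_toList_toFinset]
  constructor
  · rintro ⟨μ, hμ⟩
    exact ⟨by simpa [← hμ] using μ.parts_sum, fun x hx => μ.parts_pos (by simpa [← hμ])⟩
  · rintro ⟨hsum, hpos⟩
    exact ⟨⟨u, fun hx => hpos _ hx, by simpa⟩, rfl⟩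

theorem compositions_zero : compositions 0 = {[]} := by
  ext u
  simp [compositions]

theorem sum_compositions_succ {M : Type*} [AddCommMonoid M] (f : List ℕ → M) (n : ℕ) :
    ∑ u ∈ compositions (n + 1), f u =
      ∑ j ∈ range (n + 1), ∑ v ∈ compositions (n - j), f ((j + 1) :: v) := by
  rw [sum_sigma']
  symm
  refine sum_nbij' (fun x => (x.1 + 1) :: x.2) (fun u => ⟨u.headD 1 - 1, u.tail⟩)
    ?_ ?_ ?_ ?_ fun _ _ => rfl
  · rintro ⟨j, v⟩ hjv
    simp only [mem_sigma, mem_range, mem_compositions] at hjv ⊢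
    grind
  · rintro (_ | ⟨a, v⟩) hu <;> simp only [mem_compositions] at hu
    · simp at hu
    · obtain ⟨hsum, hpos⟩ := hu
      have ha : 0 < a := hpos a List.mem_cons_self
      rw [List.sum_cons] at hsum
      simp only [mem_sigma, mem_range, mem_compositions, List.headD_cons, List.tail_cons]
      exact ⟨by omega, by omega, fun x hx => hpos x (List.mem_cons_of_mem a hx)⟩
  · rintro ⟨j, v⟩ -
    simp
  · rintro (_ | ⟨a, v⟩) hu <;> simp only [mem_compositions] at hu
    · simp at hu
    · have : 0 < a := hu.2 a List.mem_cons_self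
      simp only [List.headD_cons, List.tail_cons, List.cons.injEq, and_true]
      omega

noncomputable def compositionTerm {K : Type*} [Field K] (q : K) (p : ℕ → K) (n : ℕ)
    (u : List ℕ) : K :=
  (-1 : K) ^ (n - u.length) *
    (∏ i ∈ range u.length, qInt q (n - (u.take i).sum))⁻¹ * (u.map p).prod

theorem compositionTerm_cons {K : Type*} [Field K] (q : K) (p : ℕ → K) {n j : ℕ} {v : List ℕ}
    (hj : j ≤ n) (hv : v.sum = n - j) (hpos : ∀ x ∈ v, 0 < x) :
    compositionTerm q p (n + 1) ((j + 1) :: v) =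
      (qInt q (n + 1))⁻¹ * ((-1 : K) ^ j * p (j + 1)) * compositionTerm q p (n - j) v := by
  have hlen : v.length ≤ n - j := hv ▸ List.length_le_sum_of_one_le v hpos
  have hprod : ∏ i ∈ range (v.length + 1), qInt q (n + 1 - (((j + 1) :: v).take i).sum) =
      (∏ i ∈ range v.length, qInt q (n - j - (v.take i).sum)) * qInt q (n + 1) := by
    rw [prod_range_succ']
    congr 1
    refine prod_congr rfl fun i _ => ?_
    rw [List.take_succ_cons, List.sum_cons]
    congr 1
    omega
  simp only [compositionTerm, List.map_cons, List.prod_cons, List.length_cons, hprod, mul_inv]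
  rw [show n + 1 - (v.length + 1) = j + (n - j - v.length) by omega, pow_add]
  ring

theorem sum_partitions_eq_sum_compositions {K : Type*} [Field K] (q : K) (p : ℕ → K) (n : ℕ) :
    ∑ μ : n.Partition, (-1 : K) ^ (n - Multiset.card μ.parts) *
        (∑ u ∈ μ.parts.toList.permutations.toFinset,
          (∏ i ∈ range u.length, qInt q (n - (u.take i).sum))⁻¹) * (μ.parts.map p).prod =
      ∑ u ∈ compositions n, compositionTerm q p n u := by
  have hdisj : (↑(univ : Finset n.Partition) : Set n.Partition).PairwiseDisjoint
      fun μ => μ.parts.toList.permutations.toFinset := by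
    intro μ _ ν _ hne
    refine disjoint_left.2 fun u hμ hν => hne (Nat.Partition.ext ?_)
    rw [List.mem_permutations_toList_toFinset] at hμ hν
    rw [← hμ, ← hν]
  rw [compositions, sum_biUnion hdisj]
  refine sum_congr rfl fun μ _ => ?_
  rw [mul_sum, sum_mul]
  refine sum_congr rfl fun u hu => ?_
  rw [List.mem_permutations_toList_toFinset] at hu
  rw [compositionTerm, ← hu, Multiset.coe_card, Multiset.map_coe, Multiset.prod_coe]

theorem eq_sum_compositionTerm {K : Type*} [Field K] {q : K} {e p : ℕ → K}
    (hq : ∀ n, qInt q (n + 1) ≠ 0) (he0 : e 0 = 1)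
    (hrec : ∀ n, qInt q (n + 1) * e (n + 1) =
      ∑ j ∈ range (n + 1), e (n - j) * ((-1 : K) ^ j * p (j + 1))) (n : ℕ) :
    e n = ∑ u ∈ compositions n, compositionTerm q p n u := by
  induction n using Nat.strong_induction_on with
  | _ n ih =>
  rcases n with _ | n
  · simp [compositions_zero, compositionTerm, he0]
  calc e (n + 1)
      = (qInt q (n + 1))⁻¹ * ∑ j ∈ range (n + 1), e (n - j) * ((-1 : K) ^ j * p (j + 1)) := by
        rw [← hrec, inv_mul_cancel_left₀ (hq n)]
    _ = ∑ j ∈ range (n + 1), ∑ v ∈ compositions (n - j),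
          compositionTerm q p (n + 1) ((j + 1) :: v) := by
        rw [mul_sum]
        refine sum_congr rfl fun j hj => ?_
        rw [ih (n - j) (by omega), sum_mul, mul_sum]
        refine sum_congr rfl fun v hv => ?_
        obtain ⟨hsum, hpos⟩ := mem_compositions.1 hv
        rw [compositionTerm_cons q p (Nat.lt_succ_iff.1 (mem_range.1 hj)) hsum hpos]
        ring
    _ = ∑ u ∈ compositions (n + 1), compositionTerm q p (n + 1) u :=
        (sum_compositions_succ _ n).symm

/-- Theorem 4.2: for `n ≥ 1`, `eₙ = ∑_{|λ|=n} ε_λ [z_λ]⁻¹ [p_λ]`, where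
`ε_λ = (-1)^{|λ|-ℓ(λ)}`, `[p_λ] = ∏ᵢ [p_{λᵢ}]`, and
`[z_λ]⁻¹ = ∑_u ([n][n-u₁][n-u₁-u₂]⋯[u_r])⁻¹`, the inner sum over all distinct
permutations `u` of the parts of `λ`. -/
theorem stmt6 {K : Type*} [Field K] (q : K)
    (hq : ∀ m : ℕ, 1 ≤ m → qInt q m ≠ 0)
    (e p : ℕ → K) (he0 : e 0 = 1)
    (hdefp : qDeriv q (PowerSeries.mk e) =
      PowerSeries.mk e * PowerSeries.mk (fun n => (-1 : K) ^ n * p (n + 1))) :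
    ∀ n : ℕ, 1 ≤ n →
      e n = ∑ μ : Nat.Partition n,
        (-1 : K) ^ (n - Multiset.card μ.parts) *
          (∑ u ∈ μ.parts.toList.permutations.toFinset,
            (∏ i ∈ Finset.range u.length, qInt q (n - (u.take i).sum))⁻¹) *
          (μ.parts.map p).prod := by
  intro n _
  rw [sum_partitions_eq_sum_compositions, eq_sum_compositionTerm (fun m => hq (m + 1) m.succ_pos)
    he0 (qInt_succ_mul_eq_sum_of_qDeriv_eq_mul hdefp) n]
end

section
/- Let F be a formal power series over a commutative algebra over the Laurent series field Q((q)), with F(0)=0. Then for every k ≥ 0, the starred q-power equals the Gessel power at inverted parameter: F^{[k]*}_q = F^{[k]}_{q^{-1}}. Consequently, for any formal power series G, G[F]*_q = G[F]_{q^{-1}}, and in particular E_q[F]*_q = e_{q^{-1}}[F]_{q^{-1}}. -/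
/-!
Reversing the order of summation gives `[n + 1]_{q⁻¹} = q⁻ⁿ [n + 1]_q`, which says that
`D_{q⁻¹} = rescale q⁻¹ ∘ D_q`. Applying the ring map `rescale q⁻¹` (that is, `t ↦ q⁻¹ t`) to
the recursion defining the starred powers therefore turns it into the recursion defining the
Gessel powers at `q⁻¹`, and both families are determined by their recursion because `D_p`
is injective on series with constant coefficient zero as long as no `[n]_p` vanishes. The
remaining two claims compare coefficients, using `[k]_{q⁻¹}! = q^{-binom(k,2)} [k]_q!`.
-/

open PowerSeries

lemma rescale_C {R : Type*} [CommSemiring R] (a c : R) : rescale a (C c) = C c := by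
  ext (_ | n) <;> simp [coeff_C]

section QCalculus

variable {K : Type*} [Field K] {q : K}

lemma qInt_inv_succ (hq0 : q ≠ 0) (m : ℕ) :
    qInt q⁻¹ (m + 1) = (q ^ m)⁻¹ * qInt q (m + 1) := by
  rw [eq_inv_mul_iff_mul_eq₀ (pow_ne_zero m hq0), qInt, qInt, Finset.mul_sum,
    ← Finset.sum_range_reflect (fun i => q ^ i) (m + 1)]
  refine Finset.sum_congr rfl fun i hi => ?_
  rw [Nat.add_sub_cancel, inv_pow, ← pow_sub₀ q hq0 (Nat.lt_succ_iff.mp (Finset.mem_range.mp hi))]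

lemma qInt_inv_succ_ne_zero (hq0 : q ≠ 0) (hq : ∀ m : ℕ, 1 ≤ m → qInt q m ≠ 0) (m : ℕ) :
    qInt q⁻¹ (m + 1) ≠ 0 := by
  rw [qInt_inv_succ hq0]
  exact mul_ne_zero (inv_ne_zero (pow_ne_zero m hq0)) (hq (m + 1) m.succ_pos)

lemma qFact_inv (hq0 : q ≠ 0) (k : ℕ) :
    qFact q⁻¹ k = (q ^ k.choose 2)⁻¹ * qFact q k := by
  induction k with
  | zero => simp [qFact]
  | succ k ih =>
    simp only [qFact, Finset.prod_range_succ] at ih ⊢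
    rw [ih, qInt_inv_succ hq0, Nat.choose_succ_succ, Nat.choose_one_right, pow_add, mul_inv]
    ring

lemma qDeriv_inv_eq_rescale (hq0 : q ≠ 0) (F : PowerSeries K) :
    qDeriv q⁻¹ F = rescale q⁻¹ (qDeriv q F) := by
  ext n
  simp only [qDeriv, coeff_mk, coeff_rescale, qInt_inv_succ hq0, inv_pow, mul_assoc]

lemma qDeriv_inv_of_starred_rec (hq0 : q ≠ 0) {A B F : PowerSeries K} {k : ℕ}
    (h : qDeriv q A = C (qInt q (k + 1) * (q ^ k)⁻¹) * rescale q B * qDeriv q F) :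
    qDeriv q⁻¹ A = C (qInt q⁻¹ (k + 1)) * B * qDeriv q⁻¹ F := by
  rw [qDeriv_inv_eq_rescale hq0, qDeriv_inv_eq_rescale hq0, h, map_mul, map_mul, rescale_C,
    rescale_rescale, mul_inv_cancel₀ hq0, rescale_one, RingHom.id_apply, qInt_inv_succ hq0,
    mul_comm (q ^ k)⁻¹]

end QCalculus

section Uniqueness

variable {K : Type*} [CommRing K] [IsDomain K] {p : K}

lemma eq_of_qDeriv_eq (hp : ∀ n : ℕ, qInt p (n + 1) ≠ 0) {A B : PowerSeries K}
    (hc : constantCoeff A = constantCoeff B) (hD : qDeriv p A = qDeriv p B) : A = B := by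
  ext (_ | n)
  · simpa using hc
  · have := congrArg (coeff n) hD
    simp only [qDeriv, coeff_mk] at this
    exact mul_left_cancel₀ (hp n) this

lemma eq_of_qDeriv_rec (hp : ∀ n : ℕ, qInt p (n + 1) ≠ 0) (F : PowerSeries K) (c : ℕ → K)
    {U V : ℕ → PowerSeries K} (hU0 : U 0 = 1) (hV0 : V 0 = 1)
    (hUc : ∀ k, 0 < k → constantCoeff (U k) = 0) (hVc : ∀ k, 0 < k → constantCoeff (V k) = 0)
    (hUrec : ∀ k, 0 < k → qDeriv p (U k) = C (c k) * U (k - 1) * qDeriv p F)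
    (hVrec : ∀ k, 0 < k → qDeriv p (V k) = C (c k) * V (k - 1) * qDeriv p F) :
    U = V := by
  funext k
  induction k with
  | zero => rw [hU0, hV0]
  | succ k ih =>
    refine eq_of_qDeriv_eq hp ?_ ?_
    · rw [hUc _ k.succ_pos, hVc _ k.succ_pos]
    · rw [hUrec _ k.succ_pos, hVrec _ k.succ_pos, Nat.succ_sub_one, ih]

end Uniqueness

theorem stmt18_general {K : Type*} [Field K] (q : K) (hq0 : q ≠ 0)
    (hq : ∀ m : ℕ, 1 ≤ m → qInt q m ≠ 0)
    (F : PowerSeries K)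
    (Fk : ℕ → PowerSeries K) (hFk0 : Fk 0 = 1)
    (hFkc : ∀ k, 0 < k → PowerSeries.constantCoeff (Fk k) = 0)
    (hFkrec : ∀ k, 0 < k → qDeriv q⁻¹ (Fk k) =
      PowerSeries.C (qInt q⁻¹ k) * Fk (k - 1) * qDeriv q⁻¹ F)
    (Fks : ℕ → PowerSeries K) (hFks0 : Fks 0 = 1)
    (hFksc : ∀ k, 0 < k → PowerSeries.constantCoeff (Fks k) = 0)
    (hFksrec : ∀ k, 0 < k → qDeriv q (Fks k) =
      PowerSeries.C (qInt q k * (q ^ (k - 1))⁻¹) *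
        PowerSeries.rescale q (Fks (k - 1)) * qDeriv q F) :
    (∀ k, Fks k = Fk k) ∧
    (∀ (G : PowerSeries K) (n : ℕ),
      ∑ k ∈ Finset.range (n + 1), PowerSeries.coeff k G * PowerSeries.coeff n (Fks k)
        = ∑ k ∈ Finset.range (n + 1),
            PowerSeries.coeff k G * PowerSeries.coeff n (Fk k)) ∧
    (∀ n : ℕ,
      ∑ k ∈ Finset.range (n + 1),
          q ^ Nat.choose k 2 / qFact q k * PowerSeries.coeff n (Fks k)
        = ∑ k ∈ Finset.range (n + 1),
            (qFact q⁻¹ k)⁻¹ * PowerSeries.coeff n (Fk k)) := by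
  have hFksrec_inv :
      ∀ k, 0 < k → qDeriv q⁻¹ (Fks k) = C (qInt q⁻¹ k) * Fks (k - 1) * qDeriv q⁻¹ F
  | k + 1, hk => qDeriv_inv_of_starred_rec hq0 (hFksrec (k + 1) hk)
  have hpowers : ∀ k, Fks k = Fk k := congrFun <|
    eq_of_qDeriv_rec (qInt_inv_succ_ne_zero hq0 hq) F _ hFks0 hFk0 hFksc hFkc hFksrec_inv hFkrec
  refine ⟨hpowers, fun G n => by simp only [hpowers], fun n => ?_⟩
  refine Finset.sum_congr rfl fun k _ => ?_
  rw [hpowers, qFact_inv hq0, mul_inv, inv_inv, div_eq_mul_inv]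

/-- Theorem 7.1: let `Fk` be the Gessel powers of `F` at parameter `q⁻¹` and `Fks`
the starred q-powers of `F` at parameter `q`.  Then (i) `F^{[k]*}_q = F^{[k]}_{q⁻¹}`
for all `k`; (ii) for any `G`, `G[F]*_q = G[F]_{q⁻¹}` — coefficientwise both
compositions have coefficient `∑_k (coeff k G) ⬝ coeff n F^{[k]}` since
`g_k/[k]! = coeff k G` in either basis; (iii) `E_q[F]*_q = e_{q⁻¹}[F]_{q⁻¹}`,
since `q^{C(k,2)}/[k]_q! = 1/[k]_{q⁻¹}!`. -/
theorem stmt18 {K : Type*} [Field K] (q : K) (hq0 : q ≠ 0)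
    (hq : ∀ m : ℕ, 1 ≤ m → qInt q m ≠ 0)
    (F : PowerSeries K) (hF0 : PowerSeries.constantCoeff F = 0)
    (Fk : ℕ → PowerSeries K) (hFk0 : Fk 0 = 1)
    (hFkc : ∀ k, 0 < k → PowerSeries.constantCoeff (Fk k) = 0)
    (hFkrec : ∀ k, 0 < k → qDeriv q⁻¹ (Fk k) =
      PowerSeries.C (qInt q⁻¹ k) * Fk (k - 1) * qDeriv q⁻¹ F)
    (Fks : ℕ → PowerSeries K) (hFks0 : Fks 0 = 1)
    (hFksc : ∀ k, 0 < k → PowerSeries.constantCoeff (Fks k) = 0)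
    (hFksrec : ∀ k, 0 < k → qDeriv q (Fks k) =
      PowerSeries.C (qInt q k * (q ^ (k - 1))⁻¹) *
        PowerSeries.rescale q (Fks (k - 1)) * qDeriv q F) :
    (∀ k, Fks k = Fk k) ∧
    (∀ (G : PowerSeries K) (n : ℕ),
      ∑ k ∈ Finset.range (n + 1), PowerSeries.coeff k G * PowerSeries.coeff n (Fks k)
        = ∑ k ∈ Finset.range (n + 1),
            PowerSeries.coeff k G * PowerSeries.coeff n (Fk k)) ∧
    (∀ n : ℕ,
      ∑ k ∈ Finset.range (n + 1),
          q ^ Nat.choose k 2 / qFact q k * PowerSeries.coeff n (Fks k)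
        = ∑ k ∈ Finset.range (n + 1),
            (qFact q⁻¹ k)⁻¹ * PowerSeries.coeff n (Fk k)) :=
  stmt18_general q hq0 hq F Fk hFk0 hFkc hFkrec Fks hFks0 hFksc hFksrec
end
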